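/- Let I be a nonempty finite set and W : Z₆^I → Z₂ a nonzero function. Then TS_Ham(0, W) ≥ 2·|spt R(W)| + 1, where R(W) is the indicator, supported on the standard basis vectors, of those e_x such that the x-coordinate is odd for an odd number of elements of spt W. -/

import Mathlib

open scoped BigOperators
open scoped Classical
open MeasureTheory Filter
open scoped ENNReal NNReal

noncomputable section

/-- The length of the shortest word in the alphabet `Gens` leading from `x` to `y`
under the (not necessarily associative) multiplication `mul`. -/
def wordLen {α : Type*} (mul : α → α → α) (Gens : Set α) (x y : α) : ℕ :=
  sInf {ℓ : ℕ | ∃ w : List α, (∀ g ∈ w, g ∈ Gens) ∧ w.length = ℓ ∧ w.foldl mul x = y}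

/-- The word metric on a group associated with a generating set `S`. -/
def groupWordDist {G : Type*} [Group G] (S : Set G) (g h : G) : ℕ :=
  wordLen (· * ·) S g h

/-- A group has exponential growth w.r.t. a generating set `S` if there is `c > 1`
such that the ball of radius `r` about the identity contains at least `c ^ r`
points for infinitely many positive integers `r`. -/
def HasExpGrowth {G : Type*} [Group G] (S : Set G) : Prop :=
  ∃ c : ℝ, 1 < c ∧ ∀ N : ℕ, ∃ r : ℕ, N ≤ r ∧ 0 < r ∧
    ∃ T : Finset G, (∀ g ∈ T, groupWordDist S 1 g ≤ r) ∧ (c : ℝ) ^ r ≤ (T.card : ℝ)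

/-- The pinned travelling salesman metric associated with the distance function `ρ`
and basepoint `x0`, evaluated on two (finitely supported) functions `X → ZMod 2`. -/
def TS {X : Type*} (ρ : X → X → ℝ) (x0 : X) (A B : X → ZMod 2) : ℝ :=
  if A = B then 0
  else 1 + sInf {L : ℝ | ∃ (ℓ : ℕ) (x : ℕ → X), 1 ≤ ℓ ∧ x 0 = x0 ∧ x ℓ = x0 ∧
    (∀ p : X, A p + B p ≠ 0 → ∃ i < ℓ, x i = p) ∧
    L = ∑ i ∈ Finset.range ℓ, ρ (x i) (x (i + 1))}

/-- The quotient of an addition-invariant distance function `d` by the subgroup `F`,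
expressed on representatives: `quotDistBy d F x y = inf_{v ∈ F} d x (y + v)`. -/
def quotDistBy {E : Type*} [Add E] (d : E → E → ℝ) (F : Set E) (x y : E) : ℝ :=
  sInf {r : ℝ | ∃ v ∈ F, r = d x (y + v)}

/-- The distortion of a map `f` between "metric" spaces `(Y, σ)` and `(Z, θ)`, where the
suprema defining it run over pairs satisfying the apartness relation `P`
(typically: `≠`, or "lying in distinct cosets"). -/
def distortionOn {Y Z : Type*} (σ : Y → Y → ℝ) (θ : Z → Z → ℝ)
    (P : Y → Y → Prop) (f : Y → Z) : ℝ :=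
  sSup {r : ℝ | ∃ u v, P u v ∧ r = θ (f u) (f v) / σ u v} *
  sSup {r : ℝ | ∃ u v, P u v ∧ r = σ u v / θ (f u) (f v)}

/-- Multiplication of the (restricted) wreath-product-style semidirect product
`M^{⊕H} ⋊ H`, where `H` has multiplication `hmul` and acts on `H →₀ M` by
coordinate right-translation:
`(a, h₁) · (b, h₂) = ((a (· h₂⁻¹)) + b, h₁ h₂)`. -/
def wrMul {H M : Type*} [AddCommMonoid M] (hmul : H → H → H) :
    ((H →₀ M) × H) → ((H →₀ M) × H) → ((H →₀ M) × H) :=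
  fun x y => (Finsupp.mapDomain (fun h => hmul h y.2) x.1 + y.1, hmul x.2 y.2)

/-- The lifted generating set `{(±e_{e_G}, e_G)} ∪ {(0, s) : s ∈ S}` of `Z₆ ≀ G`. -/
def liftGens6 {G : Type*} [Group G] (S : Set G) : Set ((G →₀ ZMod 6) × G) :=
  {p | p = (Finsupp.single (1 : G) (1 : ZMod 6), (1 : G)) ∨
       p = (Finsupp.single (1 : G) (-1 : ZMod 6), (1 : G)) ∨
       (p.1 = 0 ∧ p.2 ∈ S)}

/-- The lifted generating set `{(δ_{e_H}, e_H)} ∪ {(0, t) : t ∈ T}` of `Z₂^{⊕H} ⋊ H`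
(and, after quotienting by an invariant subspace `V`, of `(Z₂^{⊕H}/V) ⋊ H`). -/
def liftGens2 {H : Type*} (eH : H) (T : Set H) : Set ((H →₀ ZMod 2) × H) :=
  {p | p = (Finsupp.single eH (1 : ZMod 2), eH) ∨ (p.1 = 0 ∧ p.2 ∈ T)}

/-- The word metric of the quotient group `(Z₂^{⊕H}/V) ⋊ H` (`V` an `H`-invariant
subspace of `Z₂^{⊕H}`), expressed on representatives in `Z₂^{⊕H} × H`: the least
length of a word in `Gens` leading from `x` to some representative of the coset
of `y`. -/
def quotWordLen {H : Type*} (hmul : H → H → H) (V : Set (H →₀ ZMod 2))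
    (Gens : Set ((H →₀ ZMod 2) × H)) (x y : (H →₀ ZMod 2) × H) : ℕ :=
  sInf {ℓ : ℕ | ∃ w : List ((H →₀ ZMod 2) × H), (∀ g ∈ w, g ∈ Gens) ∧ w.length = ℓ ∧
    ∃ v ∈ V, w.foldl (wrMul hmul) x = (y.1 + v, y.2)}

/-- The word metric on `Z₆ = ZMod 6` for the generating set `{1, -1}`. -/
def z6dist (a b : ZMod 6) : ℕ := min (b - a).val (a - b).val

/-- The Hamming metric on `Z₆^I` built from the word metric on each factor. -/
def hamZ6 {I : Type*} [Fintype I] (u v : I → ZMod 6) : ℝ :=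
  ∑ x, (z6dist (u x) (v x) : ℝ)

/-- The pinned travelling salesman metric on `Z₂^{Z₆^I}` over `(Z₆^I, d_Ham)`,
pinned at `0`. -/
def TSHam {I : Type*} [Fintype I] (A B : (I → ZMod 6) → ZMod 2) : ℝ :=
  TS hamZ6 (0 : I → ZMod 6) A B

/-- Coordinatewise reduction `Z₆ → Z₂`. -/
def zbar (a : ZMod 6) : ZMod 2 := (a.val : ZMod 2)

/-- The `Z₂`-valued inner product on `Z₂^I`. -/
def ip2 {I : Type*} [Fintype I] (a b : I → ZMod 2) : ZMod 2 := ∑ x, a x * b x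

/-- The annihilator of a set `C ⊆ Z₂^I`. -/
def perp2 {I : Type*} [Fintype I] (C : Set (I → ZMod 2)) : Set (I → ZMod 2) :=
  {a | ∀ c ∈ C, ip2 a c = 0}

/-- The `Z₂`-valued inner product on `Z₂^α` for a finite type `α`. -/
def ipF {α : Type*} [Fintype α] (W V : α → ZMod 2) : ZMod 2 := ∑ w, W w * V w

/-- The linear functional `L_a : Z₆^I → Z₂`, `L_a(v) = ⟨v̄, a⟩`. -/
def La {I : Type*} [Fintype I] (a : I → ZMod 2) : (I → ZMod 6) → ZMod 2 :=
  fun v => ∑ x, zbar (v x) * a x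

/-- The subspace `D = span({1} ∪ {L_a : a ∈ C}) ≤ Z₂^{Z₆^I}`. -/
def Dspan {I : Type*} [Fintype I] (C : Set (I → ZMod 2)) :
    Submodule (ZMod 2) ((I → ZMod 6) → ZMod 2) :=
  Submodule.span (ZMod 2) ({fun _ => (1 : ZMod 2)} ∪ (La '' C))

/-- The annihilator `D^⊥` of `D = span({1} ∪ {L_a : a ∈ C})` inside `Z₂^{Z₆^I}`. -/
def DperpSet {I : Type*} [Fintype I] (C : Set (I → ZMod 2)) :
    Set ((I → ZMod 6) → ZMod 2) :=
  {W | ∀ D' ∈ Dspan C, ipF W D' = 0}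

/-- The set `B = {e_x : x ∈ I}` of standard basis vectors in `Z₆^I`. -/
def Bset {I : Type*} [Fintype I] : Set (I → ZMod 6) :=
  Set.range (fun x : I => Pi.single x (1 : ZMod 6))

/-- The embedding `ξ : Z₂^I → Z₂^{Z₆^I}`: `ξ(a)` is supported on `B` with
`ξ(a)(e_x) = a_x`. -/
def xi {I : Type*} [Fintype I] (a : I → ZMod 2) : (I → ZMod 6) → ZMod 2 :=
  fun w => ∑ x : I, if w = (Pi.single x (1 : ZMod 6) : I → ZMod 6) then a x else 0

/-- The map `R : Z₂^{Z₆^I} → Z₂^{Z₆^I}`: `R(W)` is supported on `B` with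
`R(W)(e_x) = Σ_w W(w)·⟨ē_x, w̄⟩`. -/
def Rmap {I : Type*} [Fintype I] (W : (I → ZMod 6) → ZMod 2) :
    (I → ZMod 6) → ZMod 2 :=
  fun w => ∑ x : I, if w = (Pi.single x (1 : ZMod 6) : I → ZMod 6) then (∑ v : I → ZMod 6, W v * zbar (v x)) else 0

/-- The indicator function `𝒜 : Z₆ → Z₂` of `{0, 1, 3, 4} ⊆ Z₆`. -/
def Acal : ZMod 6 → ZMod 2 := fun v => if v = 0 ∨ v = 1 ∨ v = 3 ∨ v = 4 then 1 else 0


/-- The map `Q_n` of the paper: given the excluded region `E` (which should equal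
`I₁ ∪ ⋯ ∪ Iₙ ∪ {y₁, …, yₙ}`), the set `Iₙ = In`, the point `yₙ = yn`,
a vector `u ∈ Z₆^{⊕(X∖E)}`, a function `W ∈ Z₂^{Z₆^{Iₙ}}` and `u' ∈ Z₆`,
`Qmap E In yn u W u'` is the element of `Z₂^{Z₆^{⊕X}}` given by
`w ↦ [w|_{X∖E} = u|_{X∖E}] ⬝ W(w|_{Iₙ}) ⬝ 𝒜(w_{yₙ} - u')`. -/
def Qmap {X : Type*} (E : Set X) (In : Finset X) (yn : X)
    (u : X →₀ ZMod 6) (W : ({x // x ∈ In} → ZMod 6) → ZMod 2) (u' : ZMod 6) :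
    (X →₀ ZMod 6) → ZMod 2 :=
  fun w => (if ∀ x ∉ E, w x = u x then 1 else 0) *
    W (fun x => w x.1) * Acal (w yn - u')

/-- The finite set `Eₙ = I₁ ∪ ⋯ ∪ Iₙ ∪ {y₁, …, yₙ}` (with indexing starting at `0`). -/
def EFin {G : Type*} (I : ℕ → Finset G) (y : ℕ → G) (n : ℕ) : Finset G :=
  ((Finset.range (n + 1)).biUnion I) ∪ (Finset.range (n + 1)).image y

/-- The function `Q̃ₙ(0, W, 0) ∈ Z₂^{⊕(Z₆ ≀ G)}`, realized as a finitely supported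
function: it is supported on pairs `(w, e_G)` with `w` supported inside `E`, and its
value there is `W(w|_{Iₙ}) ⬝ 𝒜(w_{yₙ})`.  (Here `E` should contain `Iₙ` and `yₙ`;
it will be `EFin I y n`.) -/
def QF {G : Type*} [Group G] (E : Finset G) (In : Finset G) (yn : G)
    (W : ({x // x ∈ In} → ZMod 6) → ZMod 2) : (((G →₀ ZMod 6) × G) →₀ ZMod 2) :=
  ∑ f : ({x // x ∈ E} → ZMod 6),
    Finsupp.single ((∑ x ∈ E.attach, Finsupp.single (x : G) (f x), (1 : G)))
      (W (fun x => if h : (x : G) ∈ E then f ⟨x, h⟩ else 0) *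
        Acal (if h : yn ∈ E then f ⟨yn, h⟩ else 0))

/-- Given a translation-invariant subspace `U ≤ Z₂^{⊕((Z₆ ≀ G)₀)}` (the zero section
being identified with `Z₆^{⊕G}`), the subspace
`V := {𝒱 ∈ Z₂^{⊕(Z₆ ≀ G)} : ∀ g₁, ((w_g)_g ↦ 𝒱((w_{g g₁⁻¹})_g, g₁)) ∈ U}`. -/
def Vext {G : Type*} [Group G] (U : Set ((G →₀ ZMod 6) →₀ ZMod 2)) :
    Set (((G →₀ ZMod 6) × G) →₀ ZMod 2) :=
  {V : ((G →₀ ZMod 6) × G) →₀ ZMod 2 | ∀ g₁ : G, ∃ u ∈ U,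
    ∀ w : G →₀ ZMod 6, u w = V (Finsupp.mapDomain (· * g₁) w, g₁)}

/-- Extension by zero of a function on the zero section `(Z₆ ≀ G)₀ ≅ Z₆^{⊕G}`
to all of `Z₆ ≀ G`. -/
def extZero {G : Type*} [Group G] (A : (G →₀ ZMod 6) →₀ ZMod 2) :
    ((G →₀ ZMod 6) × G) →₀ ZMod 2 :=
  Finsupp.mapDomain (fun w => (w, (1 : G))) A

end

/-! If `R(W)(e_x) ≠ 0`, some `v ∈ spt W` has odd, hence nonzero, `x`-coordinate. A tour
from `0` that visits `v` and returns to `0` must move its `x`-coordinate away from `0` and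
back, which costs at least `2` in the word metric of `Z₆`. Summing over these coordinates,
every admissible tour has Hamming length at least `2·|spt R(W)|`. -/

section ClosedWalk

variable {α : Type*} (d : α → α → ℕ)

theorem le_sum_Ico_of_triangle (hself : ∀ a, d a a = 0)
    (htri : ∀ a b c, d a c ≤ d a b + d b c) (f : ℕ → α) {m n : ℕ} (hmn : m ≤ n) :
    d (f m) (f n) ≤ ∑ i ∈ Finset.Ico m n, d (f i) (f (i + 1)) := by
  induction n, hmn using Nat.le_induction with
  | base => simp [hself]
  | succ n hmn ih =>
    rw [Finset.sum_Ico_succ_top hmn]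
    exact (htri _ (f n) _).trans (Nat.add_le_add_right ih _)

/-- Both the way out to `f k` and the way back cost at least one. -/
theorem two_le_sum_range_of_closed_walk (hself : ∀ a, d a a = 0)
    (htri : ∀ a b c, d a c ≤ d a b + d b c) (hpos : ∀ a b, a ≠ b → 1 ≤ d a b)
    (f : ℕ → α) {k n : ℕ} (hkn : k ≤ n) (hk : f k ≠ f 0) (hn : f n = f 0) :
    2 ≤ ∑ i ∈ Finset.range n, d (f i) (f (i + 1)) := by
  have hout := (hpos _ _ hk.symm).trans (le_sum_Ico_of_triangle d hself htri f k.zero_le)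
  have hback := (hpos _ _ (hn ▸ hk)).trans (le_sum_Ico_of_triangle d hself htri f hkn)
  rw [Finset.range_eq_Ico, ← Finset.sum_Ico_consecutive _ k.zero_le hkn]
  omega

end ClosedWalk

theorem z6dist_self (a : ZMod 6) : z6dist a a = 0 := by simp [z6dist]

theorem z6dist_triangle : ∀ a b c : ZMod 6, z6dist a c ≤ z6dist a b + z6dist b c := by
  decide

theorem one_le_z6dist : ∀ a b : ZMod 6, a ≠ b → 1 ≤ z6dist a b := by decide

theorem le_TS_of_forall_tour {X : Type*} (ρ : X → X → ℝ) (x₀ : X) {A B : X → ZMod 2}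
    (hAB : A ≠ B) (hfin : (Function.support (A + B)).Finite) (L : ℝ)
    (hL : ∀ (ℓ : ℕ) (x : ℕ → X), 1 ≤ ℓ → x 0 = x₀ → x ℓ = x₀ →
      (∀ p, A p + B p ≠ 0 → ∃ i < ℓ, x i = p) →
      L ≤ ∑ i ∈ Finset.range ℓ, ρ (x i) (x (i + 1))) :
    1 + L ≤ TS ρ x₀ A B := by
  rw [TS, if_neg hAB]
  refine (add_le_add_iff_left 1).2 (le_csInf ?_ ?_)
  · obtain ⟨l, hl⟩ : ∃ l : List X, ∀ p, A p + B p ≠ 0 → p ∈ l :=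
      ⟨hfin.toFinset.toList, fun p hp => by simpa using hp⟩
    -- the tour `x₀, l₀, l₁, …, x₀`
    refine ⟨_, l.length + 1, fun i => (x₀ :: l).getD i x₀, by omega, rfl,
      List.getD_eq_default _ _ (by simp), fun p hp => ?_, rfl⟩
    obtain ⟨j, hj, rfl⟩ := List.mem_iff_getElem.1 (hl p hp)
    exact ⟨j + 1, by omega, List.getD_eq_getElem l x₀ hj⟩
  · rintro _ ⟨ℓ, x, hℓ, h0, hℓx, hcov, rfl⟩
    exact hL ℓ x hℓ h0 hℓx hcov

theorem pi_single_one_inj {I : Type*} {x y : I} :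
    (Pi.single x 1 : I → ZMod 6) = Pi.single y 1 ↔ x = y := by
  refine ⟨fun h => ?_, fun h => h ▸ rfl⟩
  by_contra hxy
  exact absurd (by simpa [Pi.single_eq_of_ne hxy] using congrFun h x)
    (by decide : (1 : ZMod 6) ≠ 0)

section Rmap

variable {I : Type*} [Fintype I]

theorem Rmap_single (W : (I → ZMod 6) → ZMod 2) (x : I) :
    Rmap W (Pi.single x 1) = ∑ v, W v * zbar (v x) := by
  simp only [Rmap, pi_single_one_inj, Finset.sum_ite_eq, Finset.mem_univ, if_true]

theorem support_Rmap (W : (I → ZMod 6) → ZMod 2) :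
    Function.support (Rmap W) =
      (fun x : I => (Pi.single x 1 : I → ZMod 6)) '' {x | ∑ v, W v * zbar (v x) ≠ 0} := by
  ext w
  refine ⟨fun hw => ?_, ?_⟩
  · obtain ⟨x, -, hx⟩ := Finset.exists_ne_zero_of_sum_ne_zero hw
    by_cases hwx : w = Pi.single x 1
    · subst hwx
      exact ⟨x, by rwa [if_pos rfl] at hx, rfl⟩
    · exact absurd (if_neg hwx) hx
  · rintro ⟨x, hx, rfl⟩
    rwa [Function.mem_support, Rmap_single]

theorem ncard_support_Rmap (W : (I → ZMod 6) → ZMod 2) :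
    (Function.support (Rmap W)).ncard =
      (Finset.univ.filter fun x : I => ∑ v, W v * zbar (v x) ≠ 0).card := by
  rw [support_Rmap, Set.ncard_image_of_injective _ fun _ _ => pi_single_one_inj.1,
    ← Set.ncard_coe_finset, Finset.coe_filter_univ]

theorem exists_ne_zero_of_sum_mul_zbar_ne_zero {W : (I → ZMod 6) → ZMod 2} {x : I}
    (h : ∑ v, W v * zbar (v x) ≠ 0) : ∃ v, W v ≠ 0 ∧ v x ≠ 0 := by
  obtain ⟨v, -, hv⟩ := Finset.exists_ne_zero_of_sum_ne_zero h
  refine ⟨v, left_ne_zero_of_mul hv, fun hvx => ?_⟩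
  simp [hvx, zbar] at hv

end Rmap

theorem TSHam_ge_Rmap_support_general {I : Type*} [Fintype I]
    (W : (I → ZMod 6) → ZMod 2) (hW : W ≠ 0) :
    2 * (Set.ncard (Function.support (Rmap W)) : ℝ) + 1 ≤
      TSHam (0 : (I → ZMod 6) → ZMod 2) W := by
  set S := Finset.univ.filter fun x : I => ∑ v, W v * zbar (v x) ≠ 0
  rw [ncard_support_Rmap, add_comm, TSHam]
  refine le_TS_of_forall_tour hamZ6 0 (Ne.symm hW) (Set.toFinite _) _
    fun ℓ x _ hx0 hxℓ hcov => ?_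
  have hcoord : ∀ j ∈ S, 2 ≤ ∑ i ∈ Finset.range ℓ, z6dist (x i j) (x (i + 1) j) := by
    intro j hj
    obtain ⟨v, hWv, hvj⟩ := exists_ne_zero_of_sum_mul_zbar_ne_zero (Finset.mem_filter.1 hj).2
    obtain ⟨k, hk, rfl⟩ := hcov v (by simpa using hWv)
    exact two_le_sum_range_of_closed_walk z6dist z6dist_self z6dist_triangle one_le_z6dist
      (fun i => x i j) hk.le (by simpa [hx0] using hvj) (by simp [hx0, hxℓ])
  calc 2 * (S.card : ℝ) = ∑ _j ∈ S, (2 : ℝ) := by simp [mul_comm]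
    _ ≤ ∑ j ∈ S, ∑ i ∈ Finset.range ℓ, (z6dist (x i j) (x (i + 1) j) : ℝ) :=
      Finset.sum_le_sum fun j hj => by exact_mod_cast hcoord j hj
    _ ≤ ∑ j, ∑ i ∈ Finset.range ℓ, (z6dist (x i j) (x (i + 1) j) : ℝ) :=
      Finset.sum_le_sum_of_subset_of_nonneg (Finset.subset_univ _) fun _ _ _ => by positivity
    _ = ∑ i ∈ Finset.range ℓ, hamZ6 (x i) (x (i + 1)) := Finset.sum_comm

/-- For a nonzero `W : Z₆^I → Z₂`,
`TS_Ham(0, W) ≥ 2·|spt R(W)| + 1`. -/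
theorem TSHam_ge_Rmap_support {I : Type*} [Fintype I] [Nonempty I]
    (W : (I → ZMod 6) → ZMod 2) (hW : W ≠ 0) :
    2 * (Set.ncard (Function.support (Rmap W)) : ℝ) + 1 ≤
      TSHam (0 : (I → ZMod 6) → ZMod 2) W :=
  TSHam_ge_Rmap_support_general W hW
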